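/- arXiv:2204.00216 — 4 statements merged into one kernel-verified Lean document; each statement's English description precedes it below -/
import Mathlib

section
/- Let S be an m × m real matrix (m ≥ 1) that is entrywise nonnegative, i.e., S i j ≥ 0 for all indices i, j. Then trace(exp S) = m if and only if trace(S^k) = 0 for every integer k ≥ 1. -/
set_option maxHeartbeats 1000000
open scoped Matrix

/-- For an entrywise nonnegative real `m × m` matrix `S` (with `m ≥ 1`),
`trace (exp S) = m` iff `trace (S ^ k) = 0` for every `k ≥ 1`. -/
theorem trace_exp_eq_card_iff_trace_pow_eq_zero
    (m : ℕ) (hm : 1 ≤ m) (S : Matrix (Fin m) (Fin m) ℝ)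
    (hS : ∀ i j, 0 ≤ S i j) :
    Matrix.trace (NormedSpace.exp S) = (m : ℝ) ↔
      ∀ k : ℕ, 1 ≤ k → Matrix.trace (S ^ k) = 0 := by
  letI : NormedRing (Matrix (Fin m) (Fin m) ℝ) := Matrix.linftyOpNormedRing
  letI : NormedAlgebra ℝ (Matrix (Fin m) (Fin m) ℝ) := Matrix.linftyOpNormedAlgebra
  have hsum : Summable fun n : ℕ => ((n.factorial : ℝ)⁻¹) • S ^ n :=
    NormedSpace.expSeries_summable' S
  set f := LinearMap.toContinuousLinearMap (Matrix.traceLinearMap (Fin m) ℝ ℝ) with hf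
  have hfapp : ∀ A : Matrix (Fin m) (Fin m) ℝ, f A = Matrix.trace A := fun A => rfl
  have h1 : Matrix.trace (NormedSpace.exp S)
      = ∑' n : ℕ, ((n.factorial : ℝ)⁻¹) * Matrix.trace (S ^ n) := by
    rw [NormedSpace.exp_eq_tsum (𝕂 := ℝ)]
    have := f.map_tsum hsum
    simpa [hfapp, Matrix.trace_smul, smul_eq_mul] using this
  have hts : Summable fun n : ℕ => ((n.factorial : ℝ)⁻¹) * Matrix.trace (S ^ n) := by
    have h := hsum.map f f.continuous
    refine h.congr fun n => ?_
    simp [Function.comp, hfapp, Matrix.trace_smul, smul_eq_mul]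
  have hpow : ∀ n : ℕ, ∀ i j, 0 ≤ (S ^ n) i j := by
    intro n
    induction n with
    | zero =>
      intro i j
      by_cases h : i = j <;> simp [pow_zero, Matrix.one_apply, h]
    | succ n ih =>
      intro i j
      rw [pow_succ, Matrix.mul_apply]
      exact Finset.sum_nonneg fun k _ => mul_nonneg (ih i k) (hS k j)
  have htr : ∀ n : ℕ, 0 ≤ Matrix.trace (S ^ n) := fun n =>
    Finset.sum_nonneg fun i _ => hpow n i i
  have hterm : ∀ n : ℕ, 0 ≤ ((n.factorial : ℝ)⁻¹) * Matrix.trace (S ^ n) := fun n =>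
    mul_nonneg (by positivity) (htr n)
  have hts' : Summable fun n : ℕ => (((n + 1).factorial : ℝ)⁻¹) * Matrix.trace (S ^ (n + 1)) :=
    (summable_nat_add_iff (f := fun n : ℕ => ((n.factorial : ℝ)⁻¹) * Matrix.trace (S ^ n)) 1).2 hts
  rw [h1, hts.tsum_eq_zero_add]
  have h0 : ((Nat.factorial 0 : ℝ)⁻¹) * Matrix.trace (S ^ 0) = (m : ℝ) := by
    simp [Matrix.trace_one]
  rw [h0]
  rw [add_eq_left]
  constructor
  · intro h k hk
    obtain ⟨n, rfl⟩ := Nat.exists_eq_add_of_le hk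
    have hle := hts'.le_tsum n (fun j _ => hterm (j + 1))
    rw [h] at hle
    have := le_antisymm hle (hterm (n + 1))
    have hfac : (((n + 1).factorial : ℝ)⁻¹) ≠ 0 := by positivity
    have := mul_eq_zero.mp this
    rcases this with h' | h'
    · exact absurd h' hfac
    · simpa [add_comm] using h'
  · intro h
    have : ∀ n : ℕ, (((n + 1).factorial : ℝ)⁻¹) * Matrix.trace (S ^ (n + 1)) = 0 := by
      intro n
      rw [h (n + 1) (Nat.succ_le_succ (Nat.zero_le n)), mul_zero]
    simp [this]
end

section
/- Let S be an m × m real matrix that is entrywise nonnegative, i.e., S i j ≥ 0 for all indices i, j. Then trace(S^k) = 0 for every integer k ≥ 1 if and only if the support digraph of S is acyclic, i.e., there is no index i with Relation.TransGen (fun a b => S a b ≠ 0) i i. -/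
/-!
The entry `(S ^ k) i j` is a sum of products `S i a₁ * S a₁ a₂ * ⋯ * S aₖ₋₁ j`,
so it is nonzero only along a walk of length `k` in the support digraph; when `S ≥ 0` there is no
cancellation and conversely every such walk makes the entry positive. Hence `trace (S ^ k)`, a sum
of nonnegative diagonal entries, vanishes for all `k ≥ 1` exactly when there is no closed walk.
-/

namespace Matrix

variable {n R : Type*} [Fintype n]

theorem trace_eq_zero_iff_of_nonneg [AddCommMonoid R] [PartialOrder R] [IsOrderedAddMonoid R]
    {A : Matrix n n R} (hA : ∀ i, 0 ≤ A i i) : A.trace = 0 ↔ ∀ i, A i i = 0 :=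
  Fintype.sum_eq_zero_iff_of_nonneg hA |>.trans funext_iff

variable [DecidableEq n]

theorem transGen_of_pow_succ_apply_ne_zero [Semiring R] [NoZeroDivisors R] (S : Matrix n n R)
    (k : ℕ) {i j : n} (h : (S ^ (k + 1)) i j ≠ 0) :
    Relation.TransGen (fun a b => S a b ≠ 0) i j := by
  induction k generalizing j with
  | zero => exact .single (by simpa using h)
  | succ k ih =>
    rw [pow_succ, mul_apply] at h
    obtain ⟨a, -, ha⟩ := Finset.exists_ne_zero_of_sum_ne_zero h
    exact .tail (ih (left_ne_zero_of_mul ha)) (right_ne_zero_of_mul ha)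

theorem exists_pow_apply_pos_of_transGen [Semiring R] [PartialOrder R] [IsStrictOrderedRing R]
    {S : Matrix n n R} (hS : ∀ i j, 0 ≤ S i j)
    {i j : n} (h : Relation.TransGen (fun a b => S a b ≠ 0) i j) :
    ∃ k, 1 ≤ k ∧ 0 < (S ^ k) i j := by
  induction h with
  | single hij => exact ⟨1, le_rfl, by simpa using (hS _ _).lt_of_ne' hij⟩
  | @tail b c _ hbc ih =>
    obtain ⟨k, hk, hpos⟩ := ih
    refine ⟨k + 1, hk.trans k.le_succ, ?_⟩
    rw [pow_succ, mul_apply]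
    exact Finset.sum_pos' (fun a _ => mul_nonneg (pow_apply_nonneg hS k i a) (hS a c))
      ⟨b, Finset.mem_univ b, mul_pos hpos ((hS b c).lt_of_ne' hbc)⟩

end Matrix

open Matrix in
/-- For an entrywise nonnegative real `m × m` matrix `S`, all traces of positive powers of
`S` vanish iff the support digraph of `S` is acyclic. -/
theorem trace_pow_eq_zero_iff_acyclic
    (m : ℕ) (S : Matrix (Fin m) (Fin m) ℝ)
    (hS : ∀ i j, 0 ≤ S i j) :
    (∀ k : ℕ, 1 ≤ k → Matrix.trace (S ^ k) = 0) ↔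
      ∀ i : Fin m, ¬ Relation.TransGen (fun a b => S a b ≠ 0) i i := by
  have trace_pow_eq_zero_iff (k : ℕ) : (S ^ k).trace = 0 ↔ ∀ i, (S ^ k) i i = 0 :=
    trace_eq_zero_iff_of_nonneg fun i => pow_apply_nonneg hS k i i
  constructor
  · intro htrace i hcycle
    obtain ⟨k, hk, hpos⟩ := exists_pow_apply_pos_of_transGen hS hcycle
    exact hpos.ne' ((trace_pow_eq_zero_iff k).mp (htrace k hk) i)
  · rintro hacyclic (_ | k) hk
    · exact absurd hk (by norm_num)
    · exact (trace_pow_eq_zero_iff _).mpr fun i =>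
        by_contra fun hi => hacyclic i (transGen_of_pow_succ_apply_ne_zero S k hi)
end

section
/- Let W be an m × m real matrix (m ≥ 1) and let W ⊙ W denote its entrywise (Hadamard) square, so (W ⊙ W) i j = (W i j)^2. Then trace(exp(W ⊙ W)) = m if and only if the support digraph of W is acyclic, i.e., there is no index i with Relation.TransGen (fun a b => W a b ≠ 0) i i. -/
open Matrix

attribute [local instance] Matrix.linftyOpNormedRing Matrix.linftyOpNormedAlgebra

section aux

variable {m : ℕ} (A : Matrix (Fin m) (Fin m) ℝ)

lemma pow_entry_nonneg (hA : ∀ i j, 0 ≤ A i j) (k : ℕ) (i j : Fin m) :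
    0 ≤ (A ^ k) i j := by
  induction k generalizing i j with
  | zero => simp [Matrix.one_apply]; positivity
  | succ n ih =>
      rw [pow_succ, Matrix.mul_apply]
      exact Finset.sum_nonneg fun l _ => mul_nonneg (ih i l) (hA l j)

lemma pow_ne_zero_reflTrans (k : ℕ) (i j : Fin m) (h : (A ^ k) i j ≠ 0) :
    Relation.ReflTransGen (fun a b => A a b ≠ 0) i j := by
  induction k generalizing i j with
  | zero =>
      simp only [pow_zero, Matrix.one_apply, ne_eq, ite_eq_right_iff, not_forall] at h
      exact h.1 ▸ Relation.ReflTransGen.refl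
  | succ n ih =>
      rw [pow_succ', Matrix.mul_apply] at h
      obtain ⟨l, -, hl⟩ := Finset.exists_ne_zero_of_sum_ne_zero h
      exact Relation.ReflTransGen.head (fun hz => hl (by rw [hz, zero_mul]))
        (ih l j fun hz => hl (by rw [hz, mul_zero]))

lemma pow_succ_ne_zero_trans (k : ℕ) (i j : Fin m) (h : (A ^ (k + 1)) i j ≠ 0) :
    Relation.TransGen (fun a b => A a b ≠ 0) i j := by
  rw [pow_succ', Matrix.mul_apply] at h
  obtain ⟨l, -, hl⟩ := Finset.exists_ne_zero_of_sum_ne_zero h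
  have h1 : A i l ≠ 0 := fun hz => hl (by rw [hz, zero_mul])
  have h2 := pow_ne_zero_reflTrans A k l j fun hz => hl (by rw [hz, mul_zero])
  exact Relation.TransGen.head' h1 h2

lemma trans_pow_pos (hA : ∀ i j, 0 ≤ A i j) {i j : Fin m}
    (h : Relation.TransGen (fun a b => A a b ≠ 0) i j) :
    ∃ k : ℕ, 0 < (A ^ (k + 1)) i j := by
  induction h with
  | single hb => exact ⟨0, by simpa [pow_one] using lt_of_le_of_ne (hA _ _) (Ne.symm hb)⟩
  | @tail b c _ hbc ih =>
      obtain ⟨k, hk⟩ := ih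
      refine ⟨k + 1, ?_⟩
      rw [pow_succ, Matrix.mul_apply]
      have : 0 < (A ^ (k + 1)) i b * A b c :=
        mul_pos hk (lt_of_le_of_ne (hA _ _) (Ne.symm hbc))
      exact lt_of_lt_of_le this (Finset.single_le_sum
        (f := fun l => (A ^ (k + 1)) i l * A l c)
        (fun l _ => mul_nonneg (pow_entry_nonneg A hA _ i l) (hA l c)) (Finset.mem_univ b))

end aux

/-- NOTEARS acyclicity characterization: for a real `m × m` matrix `W` (with `m ≥ 1`),
`trace (exp (W ⊙ W)) = m` iff the support digraph of `W` is acyclic. -/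
theorem trace_exp_hadamard_sq_eq_card_iff_acyclic
    (m : ℕ) (hm : 1 ≤ m) (W : Matrix (Fin m) (Fin m) ℝ) :
    Matrix.trace (NormedSpace.exp (Matrix.hadamard W W)) = (m : ℝ) ↔
      ∀ i : Fin m, ¬ Relation.TransGen (fun a b => W a b ≠ 0) i i := by
  set A := Matrix.hadamard W W with hAdef
  have hA : ∀ i j, 0 ≤ A i j := fun i j => by
    simp [hAdef, Matrix.hadamard_apply, mul_self_nonneg]
  have hsupp : ∀ i j, A i j ≠ 0 ↔ W i j ≠ 0 := fun i j => by
    simp [hAdef, Matrix.hadamard_apply, mul_self_eq_zero]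
  have hrel : (fun a b => A a b ≠ 0) = fun a b => W a b ≠ 0 := by
    funext a b; exact propext (hsupp a b)
  -- summability and trace of exp
  have hsum : Summable (fun n : ℕ => (n.factorial : ℝ)⁻¹ • A ^ n) :=
    NormedSpace.expSeries_summable' (𝕂 := ℝ) A
  have hexp : NormedSpace.exp A = ∑' n : ℕ, (n.factorial : ℝ)⁻¹ • A ^ n := by
    rw [NormedSpace.exp_eq_tsum (𝕂 := ℝ)]
  have htraceC : Continuous (Matrix.trace : Matrix (Fin m) (Fin m) ℝ → ℝ) :=
    LinearMap.continuous_of_finiteDimensional (Matrix.traceLinearMap (Fin m) ℝ ℝ)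
  have htr : Matrix.trace (NormedSpace.exp A)
      = ∑' n : ℕ, (n.factorial : ℝ)⁻¹ * Matrix.trace (A ^ n) := by
    rw [hexp]
    have := (hsum.hasSum.map (Matrix.traceLinearMap (Fin m) ℝ ℝ) htraceC).tsum_eq
    simpa [Matrix.trace_smul, smul_eq_mul] using this.symm
  set f : ℕ → ℝ := fun n => (n.factorial : ℝ)⁻¹ * Matrix.trace (A ^ n) with hf
  have hfsum : Summable f := by
    have h := hsum.map (Matrix.traceLinearMap (Fin m) ℝ ℝ) htraceC
    have he : (⇑(Matrix.traceLinearMap (Fin m) ℝ ℝ) ∘ fun n : ℕ => (n.factorial : ℝ)⁻¹ • A ^ n) = f := by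
      funext n
      simp [f, Function.comp, Matrix.trace_smul, smul_eq_mul]
    rwa [he] at h
  have hf0 : f 0 = (m : ℝ) := by
    simp [f, Matrix.trace_one]
  have htrnn : ∀ n, 0 ≤ Matrix.trace (A ^ n) := fun n =>
    Finset.sum_nonneg fun i _ => pow_entry_nonneg A hA n i i
  have hfnn : ∀ n, 0 ≤ f n := fun n =>
    mul_nonneg (by positivity) (htrnn n)
  rw [htr]
  constructor
  · intro h i hcyc
    rw [← hrel] at hcyc
    obtain ⟨k, hk⟩ := trans_pow_pos A hA hcyc
    have hfk : 0 < f (k + 1) := by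
      refine mul_pos (by positivity) ?_
      refine lt_of_lt_of_le hk (Finset.single_le_sum
        (fun l _ => pow_entry_nonneg A hA _ l l) (Finset.mem_univ i))
    have h1 : ∑' n, f n = f 0 + ∑' n, f (n + 1) := hfsum.tsum_eq_zero_add
    have hshift : Summable (fun n => f (n + 1)) := (summable_nat_add_iff 1).mpr hfsum
    have h2 : f (k + 1) ≤ ∑' n, f (n + 1) := hshift.le_tsum k (fun j _ => hfnn _)
    rw [h, hf0] at h1
    linarith
  · intro h
    have hzero : ∀ n, n ≠ 0 → f n = 0 := by
      intro n hn
      obtain ⟨k, rfl⟩ := Nat.exists_eq_succ_of_ne_zero hn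
      have : Matrix.trace (A ^ (k + 1)) = 0 := by
        apply Finset.sum_eq_zero
        intro i _
        by_contra hne
        exact h i (hrel ▸ pow_succ_ne_zero_trans A k i i hne)
      simp [f, this]
    calc ∑' n, f n = f 0 + ∑' n, f (n + 1) := hfsum.tsum_eq_zero_add
      _ = (m : ℝ) := by
        have : (fun n : ℕ => f (n + 1)) = fun _ => 0 :=
          funext fun n => hzero (n + 1) (Nat.succ_ne_zero n)
        rw [hf0, this, tsum_zero, add_zero]
end

section
/- Let S be an m × m real matrix (m ≥ 1) that is entrywise nonnegative, i.e., S i j ≥ 0 for all indices i, j. Then trace(exp S) = m if and only if S is nilpotent (i.e., S^n = 0 for some n ≥ 1). -/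
open NormedSpace
open scoped Nat

lemma aux_pow_entry_nonneg {m : ℕ} {S : Matrix (Fin m) (Fin m) ℝ}
    (hS : ∀ i j, 0 ≤ S i j) (k : ℕ) : ∀ i j, 0 ≤ (S ^ k) i j := by
  induction k with
  | zero =>
    intro i j
    rw [pow_zero]
    by_cases h : i = j <;> simp [Matrix.one_apply, h]
  | succ n ih =>
    intro i j
    rw [pow_succ, Matrix.mul_apply]
    exact Finset.sum_nonneg fun a _ => mul_nonneg (ih i a) (hS a j)

lemma aux_nilpotent_of_diag_zero {m : ℕ} {S : Matrix (Fin m) (Fin m) ℝ}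
    (hS : ∀ i j, 0 ≤ S i j)
    (hdiag : ∀ k, 1 ≤ k → ∀ i, (S ^ k) i i = 0) :
    ∃ n : ℕ, 1 ≤ n ∧ S ^ n = 0 := by
  classical
  set e : Fin m → Fin m → Prop := fun i j => 0 < S i j with he
  have key : ∀ i j, Relation.TransGen e i j → ∃ k, 1 ≤ k ∧ 0 < (S ^ k) i j := by
    intro i j h
    induction h with
    | single h => exact ⟨1, le_refl 1, by simpa using h⟩
    | tail hab hbc ih =>
      obtain ⟨k, hk1, hk⟩ := ih
      refine ⟨k + 1, by omega, ?_⟩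
      rw [pow_succ, Matrix.mul_apply]
      refine Finset.sum_pos'
        (fun a _ => mul_nonneg (aux_pow_entry_nonneg hS k _ _) (hS _ _)) ?_
      exact ⟨_, Finset.mem_univ _, mul_pos hk hbc⟩
  have irr : ∀ i, ¬ Relation.TransGen e i i := by
    intro i h
    obtain ⟨k, hk1, hk⟩ := key i i h
    exact hk.ne' (hdiag k hk1 i)
  set r : Fin m → Fin m → Prop := fun a b => Relation.TransGen e b a with hr
  haveI : IsTrans (Fin m) r := ⟨fun a b c h1 h2 => h2.trans h1⟩
  haveI : IsIrrefl (Fin m) r := ⟨fun a => irr a⟩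
  have wf : WellFounded r := Finite.wellFounded_of_trans_of_irrefl r
  have persist : ∀ (a : Fin m) (n k : ℕ), (∀ j, (S ^ n) a j = 0) → n ≤ k →
      ∀ j, (S ^ k) a j = 0 := by
    intro a n k h hnk j
    obtain ⟨d, rfl⟩ := Nat.exists_eq_add_of_le hnk
    rw [pow_add, Matrix.mul_apply]
    exact Finset.sum_eq_zero fun b _ => by rw [h b, zero_mul]
  have Q : ∀ i : Fin m, ∃ n, 1 ≤ n ∧ ∀ j, (S ^ n) i j = 0 := by
    intro i
    refine wf.induction (C := fun i => ∃ n, 1 ≤ n ∧ ∀ j, (S ^ n) i j = 0) i ?_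
    intro x ih
    choose! nfun h1 h2 using ih
    set N : ℕ := Finset.univ.sup nfun + 1 with hN
    refine ⟨N, by omega, fun j => ?_⟩
    rw [hN, pow_succ', Matrix.mul_apply]
    refine Finset.sum_eq_zero fun a _ => ?_
    rcases eq_or_lt_of_le (hS x a) with h | h
    · rw [← h, zero_mul]
    · have hra : r a x := Relation.TransGen.single h
      have := persist a (nfun a) (Finset.univ.sup nfun) (h2 a hra)
        (Finset.le_sup (Finset.mem_univ a)) j
      rw [this, mul_zero]
  choose nrow h1 h2 using Q
  refine ⟨Finset.univ.sup nrow + 1, by omega, ?_⟩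
  ext i j
  have := persist i (nrow i) (Finset.univ.sup nrow + 1) (h2 i)
    (le_trans (Finset.le_sup (Finset.mem_univ i)) (Nat.le_succ _)) j
  simpa using this

/-- For an entrywise nonnegative real `m × m` matrix `S` (with `m ≥ 1`),
`trace (exp S) = m` iff `S` is nilpotent, i.e. `S ^ n = 0` for some `n ≥ 1`. -/
theorem trace_exp_eq_card_iff_nilpotent
    (m : ℕ) (hm : 1 ≤ m) (S : Matrix (Fin m) (Fin m) ℝ)
    (hS : ∀ i j, 0 ≤ S i j) :
    Matrix.trace (NormedSpace.exp S) = (m : ℝ) ↔ ∃ n : ℕ, 1 ≤ n ∧ S ^ n = 0 := by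
  classical
  letI : SeminormedRing (Matrix (Fin m) (Fin m) ℝ) := Matrix.linftyOpSemiNormedRing
  letI : NormedRing (Matrix (Fin m) (Fin m) ℝ) := Matrix.linftyOpNormedRing
  letI : NormedAlgebra ℝ (Matrix (Fin m) (Fin m) ℝ) := Matrix.linftyOpNormedAlgebra
  set f : ℕ → ℝ := fun k => (k !⁻¹ : ℝ) * Matrix.trace (S ^ k) with hf
  have hsum : Summable (fun k : ℕ => (k !⁻¹ : ℝ) • S ^ k) := expSeries_summable' S
  have key : HasSum f (Matrix.trace (exp S)) := by
    have h2 := hsum.hasSum.mapL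
      (LinearMap.toContinuousLinearMap (Matrix.traceLinearMap (Fin m) ℝ ℝ))
    rw [exp_eq_tsum ℝ]
    simpa [hf, Matrix.trace_smul, smul_eq_mul] using h2
  have hf0 : f 0 = (m : ℝ) := by
    simp [hf, Matrix.trace_one]
  have hfnonneg : ∀ k, 0 ≤ f k := by
    intro k
    refine mul_nonneg (by positivity) ?_
    exact Finset.sum_nonneg fun i _ => aux_pow_entry_nonneg hS k i i
  constructor
  · intro htr
    -- all power traces vanish
    have htsum : ∑' k, f k = (m : ℝ) := by rw [key.tsum_eq, htr]
    have hsplit : ∑' k, f (k + 1) = 0 := by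
      have := Summable.tsum_eq_zero_add key.summable
      rw [htsum, hf0] at this
      linarith
    have hzero : ∀ k : ℕ, f (k + 1) = 0 := by
      intro k
      have hs1 : Summable (fun k => f (k + 1)) :=
        (summable_nat_add_iff 1).mpr key.summable
      have hle : f (k + 1) ≤ ∑' k, f (k + 1) :=
        Summable.le_tsum hs1 k (fun j _ => hfnonneg (j + 1))
      rw [hsplit] at hle
      exact le_antisymm hle (hfnonneg (k + 1))
    have hdiag : ∀ k, 1 ≤ k → ∀ i, (S ^ k) i i = 0 := by
      intro k hk i
      obtain ⟨k', rfl⟩ := Nat.exists_eq_add_of_le hk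
      have h0 : Matrix.trace (S ^ (1 + k')) = 0 := by
        have := hzero k'
        rw [hf] at this
        have hne : ((k' + 1)! : ℝ)⁻¹ ≠ 0 := by positivity
        have := (mul_eq_zero.mp this).resolve_left hne
        rwa [Nat.add_comm 1 k']
      have := (Finset.sum_eq_zero_iff_of_nonneg
        (fun i _ => aux_pow_entry_nonneg hS (1 + k') i i)).mp h0
      exact this i (Finset.mem_univ i)
    exact aux_nilpotent_of_diag_zero hS hdiag
  · rintro ⟨n, hn1, hn⟩
    have htrz : ∀ k, 1 ≤ k → Matrix.trace (S ^ k) = 0 := by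
      intro k hk
      have hnil : IsNilpotent (S ^ k) := by
        refine ⟨n, ?_⟩
        rw [← pow_mul]
        have hle : n ≤ k * n := Nat.le_mul_of_pos_left n (by omega : 0 < k)
        obtain ⟨d, hd⟩ : ∃ d, k * n = n + d := ⟨k * n - n, (Nat.add_sub_cancel' hle).symm⟩
        rw [hd, pow_add, hn, zero_mul]
      exact (Matrix.isNilpotent_trace_of_isNilpotent hnil).eq_zero
    have hfz : ∀ k : ℕ, f (k + 1) = 0 := by
      intro k
      rw [hf]
      simp [htrz (k + 1) (by omega)]
    rw [← key.tsum_eq, Summable.tsum_eq_zero_add key.summable, hf0]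
    simp [hfz]
end
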